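/- arXiv:2602.10691 — 2 statements merged into one kernel-verified Lean document; each statement's English description precedes it below -/
import Mathlib

section
/- Let A be a d×d positive semi-definite real matrix and θ uniformly distributed on the unit sphere of ℝ^d. Then for every integer p ≥ 1, E[(θᵀAθ)^p] ≤ Tr(A^p)/d ≤ λ_max(A)^{p−1}·Tr(A)/d. -/
/-!
Expand `θ` in an orthonormal eigenbasis `b` of `A` and put `w i = ⟪b i, θ⟫²`. On the unit sphere
the weights form a probability vector and `θᵀAⁿθ = ∑ w i * λ i ^ n`, so Jensen's inequality for
`t ↦ tᵖ` gives `(θᵀAθ)ᵖ ≤ θᵀAᵖθ` pointwise. As `θ ↦ (⟪b i, θ⟫)ᵢ` is an isometry, rotation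
invariance gives `E[w i] = E[θ i ^ 2]`, and permuting coordinates shows that these all equal
`1 / d`; hence `E[θᵀAᵖθ] = Tr(Aᵖ) / d`. The second inequality is
`∑ λ i ^ p ≤ ∑ λ_max ^ (p - 1) * λ i`.
-/

open MeasureTheory Matrix

namespace Matrix

variable {ι : Type*} [Fintype ι] [DecidableEq ι] {A : Matrix ι ι ℝ}

namespace IsHermitian

theorem pow_eq (hA : A.IsHermitian) (n : ℕ) :
    A ^ n = (hA.eigenvectorUnitary : Matrix ι ι ℝ) * diagonal (hA.eigenvalues ^ n)
      * star (hA.eigenvectorUnitary : Matrix ι ι ℝ) := by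
  conv_lhs => rw [hA.spectral_theorem, ← map_pow, Unitary.conjStarAlgAut_apply, diagonal_pow]
  rfl

theorem trace_pow (hA : A.IsHermitian) (n : ℕ) : (A ^ n).trace = ∑ i, hA.eigenvalues i ^ n := by
  rw [hA.pow_eq, trace_mul_cycle, Unitary.coe_star_mul_self, one_mul, trace_diagonal]
  rfl

theorem dotProduct_pow_mulVec (hA : A.IsHermitian) (x : EuclideanSpace ℝ ι) (n : ℕ) :
    (fun i => x i) ⬝ᵥ (A ^ n *ᵥ fun i => x i)
      = ∑ i, hA.eigenvectorBasis.repr x i ^ 2 * hA.eigenvalues i ^ n := by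
  rw [hA.pow_eq, ← mulVec_mulVec, ← mulVec_mulVec, dotProduct_mulVec]
  set U : Matrix ι ι ℝ := ↑hA.eigenvectorUnitary
  have hrepr : ∀ i, hA.eigenvectorBasis.repr x i = (star U *ᵥ fun j => x j) i := fun i => by
    simp [U, OrthonormalBasis.repr_apply_apply, mulVec, dotProduct, PiLp.inner_apply, mul_comm]
  have hvecMul : (fun i => x i) ᵥ* U = star U *ᵥ fun j => x j := by
    rw [star_eq_conjTranspose, conjTranspose_eq_transpose_of_trivial, mulVec_transpose]
  simp only [hrepr, hvecMul, dotProduct, mulVec_diagonal, Pi.pow_apply]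
  exact Finset.sum_congr rfl fun i _ => by ring

end IsHermitian

namespace PosSemidef

theorem dotProduct_mulVec_pow_le (hA : A.PosSemidef) (x : EuclideanSpace ℝ ι) (hx : ‖x‖ = 1)
    (p : ℕ) :
    ((fun i => x i) ⬝ᵥ (A *ᵥ fun i => x i)) ^ p ≤ (fun i => x i) ⬝ᵥ (A ^ p *ᵥ fun i => x i) := by
  set w := fun i => hA.1.eigenvectorBasis.repr x i ^ 2
  have hw : ∑ i, w i = 1 := by
    simp only [w, ← EuclideanSpace.real_norm_sq_eq, LinearIsometryEquiv.norm_map, hx, one_pow]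
  have hquad := hA.1.dotProduct_pow_mulVec x 1
  simp only [pow_one] at hquad
  rw [hquad, hA.1.dotProduct_pow_mulVec x p]
  exact Real.pow_arith_mean_le_arith_mean_pow _ w _ (fun i _ => sq_nonneg _) hw
    (fun i _ => hA.eigenvalues_nonneg i) p

theorem trace_pow_le (hA : A.PosSemidef) {p : ℕ} (hp : 1 ≤ p) :
    (A ^ p).trace ≤ (⨆ i, hA.1.eigenvalues i) ^ (p - 1) * A.trace := by
  have hle_sup : ∀ i, hA.1.eigenvalues i ≤ ⨆ j, hA.1.eigenvalues j :=
    le_ciSup (Set.finite_range _).bddAbove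
  have htrace := hA.1.trace_pow 1
  simp only [pow_one] at htrace
  rw [hA.1.trace_pow, htrace, Finset.mul_sum]
  refine Finset.sum_le_sum fun i _ => ?_
  calc hA.1.eigenvalues i ^ p = hA.1.eigenvalues i ^ (p - 1) * hA.1.eigenvalues i := by
        rw [← pow_succ, Nat.sub_add_cancel hp]
    _ ≤ _ := mul_le_mul_of_nonneg_right
        (pow_le_pow_left₀ (hA.eigenvalues_nonneg i) (hle_sup i) _) (hA.eigenvalues_nonneg i)

end PosSemidef

end Matrix

theorem Continuous.integrable_of_ae_mem_compact {X E : Type*} [TopologicalSpace X]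
    [MeasurableSpace X] [OpensMeasurableSpace X] [T2Space X] [NormedAddCommGroup E]
    {μ : Measure X} [IsFiniteMeasureOnCompacts μ] {K : Set X} {f : X → E} (hf : Continuous f)
    (hK : IsCompact K) (hμK : ∀ᵐ x ∂μ, x ∈ K) : Integrable f μ := by
  have := hf.continuousOn.integrableOn_compact (μ := μ) hK
  rwa [IntegrableOn, Measure.restrict_eq_self_of_ae_mem hμK] at this

theorem integral_comp_linearIsometryEquiv {V E : Type*} [NormedAddCommGroup V]
    [NormedSpace ℝ V] [MeasurableSpace V] [BorelSpace V] [NormedAddCommGroup E] [NormedSpace ℝ E]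
    {μ : Measure V} {R : V ≃ₗᵢ[ℝ] V} (hR : μ.map R = μ) (f : V → E) :
    ∫ x, f (R x) ∂μ = ∫ x, f x ∂μ :=
  MeasurePreserving.integral_comp ⟨R.continuous.measurable, hR⟩
    R.toHomeomorph.measurableEmbedding f

section SphereMeasure

variable {ι : Type*} [Fintype ι] [DecidableEq ι] {μ : Measure (EuclideanSpace ℝ ι)}
  [IsProbabilityMeasure μ]

theorem integral_apply_sq (hsphere : ∀ᵐ x ∂μ, x ∈ Metric.sphere 0 1)
    (hinv : ∀ R : EuclideanSpace ℝ ι ≃ₗᵢ[ℝ] EuclideanSpace ℝ ι, μ.map R = μ) (i : ι) :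
    ∫ x, x i ^ 2 ∂μ = (Fintype.card ι : ℝ)⁻¹ := by
  have hswap : ∀ j, ∫ x, x j ^ 2 ∂μ = ∫ x, x i ^ 2 ∂μ := fun j => by
    rw [← integral_comp_linearIsometryEquiv
      (hinv (LinearIsometryEquiv.piLpCongrLeft 2 ℝ ℝ (Equiv.swap i j)))]
    simp
  have hsum : ∑ j, ∫ x, x j ^ 2 ∂μ = 1 := by
    rw [← integral_finsetSum _ fun j _ =>
      (by fun_prop : Continuous _).integrable_of_ae_mem_compact (isCompact_sphere 0 1) hsphere,
      integral_congr_ae (g := fun _ => 1) (hsphere.mono fun x hx => ?_)]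
    · simp
    · simp [← EuclideanSpace.real_norm_sq_eq, mem_sphere_zero_iff_norm.mp hx]
  simp only [hswap, Finset.sum_const, Finset.card_univ, nsmul_eq_mul] at hsum
  exact eq_inv_of_mul_eq_one_right hsum

theorem integral_dotProduct_pow_mulVec (hsphere : ∀ᵐ x ∂μ, x ∈ Metric.sphere 0 1)
    (hinv : ∀ R : EuclideanSpace ℝ ι ≃ₗᵢ[ℝ] EuclideanSpace ℝ ι, μ.map R = μ)
    {A : Matrix ι ι ℝ} (hA : A.IsHermitian) (n : ℕ) :
    ∫ x, (fun i => x i) ⬝ᵥ (A ^ n *ᵥ fun i => x i) ∂μ = (A ^ n).trace / Fintype.card ι := by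
  have hrepr : ∀ i, ∫ x, hA.eigenvectorBasis.repr x i ^ 2 ∂μ = (Fintype.card ι : ℝ)⁻¹ :=
    fun i => by
      rw [integral_comp_linearIsometryEquiv (hinv _) fun y => y i ^ 2,
        integral_apply_sq hsphere hinv]
  simp only [hA.dotProduct_pow_mulVec]
  rw [integral_finsetSum _ fun i _ =>
    (by fun_prop : Continuous _).integrable_of_ae_mem_compact (isCompact_sphere 0 1) hsphere]
  simp only [integral_mul_const, hrepr, hA.trace_pow, Finset.sum_div]
  exact Finset.sum_congr rfl fun i _ => by ring

end SphereMeasure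

theorem stmt_4_general (d : ℕ)
    (μ : Measure (EuclideanSpace ℝ (Fin d))) [IsProbabilityMeasure μ]
    (hsupp : μ (Metric.sphere (0 : EuclideanSpace ℝ (Fin d)) 1) = 1)
    (hinv : ∀ R : EuclideanSpace ℝ (Fin d) ≃ₗᵢ[ℝ] EuclideanSpace ℝ (Fin d),
      Measure.map R μ = μ)
    (A : Matrix (Fin d) (Fin d) ℝ) (hA : A.PosSemidef)
    (p : ℕ) (hp : 1 ≤ p) :
    (∫ θ, (dotProduct (fun i => θ i) (A.mulVec fun i => θ i)) ^ p ∂μ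
        ≤ Matrix.trace (A ^ p) / d) ∧
    Matrix.trace (A ^ p) / d
        ≤ (⨆ i, hA.1.eigenvalues i) ^ (p - 1) * Matrix.trace A / d := by
  refine ⟨?_, div_le_div_of_nonneg_right (hA.trace_pow_le hp) d.cast_nonneg⟩
  have hsphere : ∀ᵐ θ ∂μ, θ ∈ Metric.sphere 0 1 :=
    (prob_compl_eq_zero_iff Metric.isClosed_sphere.measurableSet).mpr hsupp
  have hquad_nonneg : ∀ θ : EuclideanSpace ℝ (Fin d),
      0 ≤ ((fun i => θ i) ⬝ᵥ (A *ᵥ fun i => θ i)) ^ p := fun θ =>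
    pow_nonneg (by simpa using hA.dotProduct_mulVec_nonneg fun i => θ i) p
  calc ∫ θ, ((fun i => θ i) ⬝ᵥ (A *ᵥ fun i => θ i)) ^ p ∂μ
      ≤ ∫ θ, (fun i => θ i) ⬝ᵥ (A ^ p *ᵥ fun i => θ i) ∂μ :=
        integral_mono_of_nonneg (.of_forall hquad_nonneg)
          ((by fun_prop : Continuous _).integrable_of_ae_mem_compact (isCompact_sphere 0 1)
            hsphere)
          (hsphere.mono fun θ hθ =>
            hA.dotProduct_mulVec_pow_le θ (mem_sphere_zero_iff_norm.mp hθ) p)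
    _ = (A ^ p).trace / d := by
        rw [integral_dotProduct_pow_mulVec hsphere hinv hA.1 p, Fintype.card_fin]

/-- For `A` positive semi-definite and `θ` uniform (rotation-invariant probability
measure) on the unit sphere of `ℝ^d`, for every integer `p ≥ 1`,
`E[(θᵀAθ)^p] ≤ Tr(A^p)/d ≤ λ_max(A)^(p-1) · Tr(A)/d`. -/
theorem stmt_4 (d : ℕ) (hd : 1 ≤ d)
    (μ : Measure (EuclideanSpace ℝ (Fin d))) [IsProbabilityMeasure μ]
    (hsupp : μ (Metric.sphere (0 : EuclideanSpace ℝ (Fin d)) 1) = 1)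
    (hinv : ∀ R : EuclideanSpace ℝ (Fin d) ≃ₗᵢ[ℝ] EuclideanSpace ℝ (Fin d),
      Measure.map R μ = μ)
    (A : Matrix (Fin d) (Fin d) ℝ) (hA : A.PosSemidef)
    (p : ℕ) (hp : 1 ≤ p) :
    (∫ θ, (dotProduct (fun i => θ i) (A.mulVec fun i => θ i)) ^ p ∂μ
        ≤ Matrix.trace (A ^ p) / d) ∧
    Matrix.trace (A ^ p) / d
        ≤ (⨆ i, hA.1.eigenvalues i) ^ (p - 1) * Matrix.trace A / d :=
  stmt_4_general d μ hsupp hinv A hA p hp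
end

section
/- Let (y_k) be a nonnegative real sequence satisfying y_{k+1} ≤ (1 − 1/(k+1))·y_k + C/(k+1)^{2α} for all k ≥ 1, where C > 0 and 1/2 < α < 1. Then there exists a constant C' > 0 such that y_k ≤ C'/k^{2α−1} for all k ≥ 1. -/
/-!
Put `β = 2α - 1 ∈ (0, 1)` and `D = max (C / (1 - β)) y₁`; we show `y_k ≤ D / k^β` by induction.
Multiplying the recursion by `k + 1`, the step reduces to `D k^{1-β} + C (k+1)^{-β} ≤ D (k+1)^{1-β}`,
which follows from the tangent-line bound `k^{1-β} ≤ (k+1)^{1-β} - (1-β)(k+1)^{-β}` for the concave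
function `t ↦ t^{1-β}` together with `C ≤ D (1 - β)`.
-/

namespace Real

theorem rpow_le_rpow_add_mul_sub {x y p : ℝ} (hx : 0 ≤ x) (hy : 0 < y) (hp₀ : 0 ≤ p)
    (hp₁ : p ≤ 1) : x ^ p ≤ y ^ p + p * y ^ (p - 1) * (x - y) := by
  have hs : -1 ≤ (x - y) / y := by
    rw [le_div_iff₀ hy]; linarith
  have hx_eq : x = y * (1 + (x - y) / y) := by field_simp; ring
  calc x ^ p = y ^ p * (1 + (x - y) / y) ^ p := by
        rw [← mul_rpow hy.le (by linarith)]; exact congrArg (· ^ p) hx_eq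
    _ ≤ y ^ p * (1 + p * ((x - y) / y)) := by
        gcongr; exact rpow_one_add_le_one_add_mul_self hs hp₀ hp₁
    _ = y ^ p + p * y ^ (p - 1) * (x - y) := by
        rw [rpow_sub_one hy.ne']; field_simp

end Real

open Real

theorem one_sub_inv_mul_div_rpow_add_le {x β C D : ℝ} (hx : 0 < x) (hβ₀ : 0 ≤ β) (hβ₁ : β < 1)
    (hD : 0 ≤ D) (hCD : C ≤ D * (1 - β)) :
    (1 - 1 / (x + 1)) * (D / x ^ β) + C / (x + 1) ^ (β + 1) ≤ D / (x + 1) ^ β := by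
  have ha : 0 < x ^ β := rpow_pos_of_pos hx β
  have hb : 0 < (x + 1) ^ β := rpow_pos_of_pos (by linarith) β
  have htangent : x / x ^ β ≤ (x + β) / (x + 1) ^ β := by
    have h := rpow_le_rpow_add_mul_sub hx.le (by linarith : 0 < x + 1) (by linarith : 0 ≤ 1 - β)
      (by linarith : 1 - β ≤ 1)
    rw [rpow_sub hx, rpow_sub (by linarith), sub_sub_cancel_left, rpow_neg (by linarith),
      rpow_one, rpow_one] at h
    calc x / x ^ β ≤ (x + 1) / (x + 1) ^ β + (1 - β) * ((x + 1) ^ β)⁻¹ * (x - (x + 1)) := h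
      _ = (x + β) / (x + 1) ^ β := by field_simp; ring
  calc (1 - 1 / (x + 1)) * (D / x ^ β) + C / (x + 1) ^ (β + 1)
      = (D * (x / x ^ β) + C / (x + 1) ^ β) / (x + 1) := by
        rw [rpow_add_one (by linarith)]; field_simp; ring
    _ ≤ (D * ((x + β) / (x + 1) ^ β) + D * (1 - β) / (x + 1) ^ β) / (x + 1) := by gcongr
    _ = D / (x + 1) ^ β := by field_simp; ring

theorem le_div_rpow_of_le_one_sub_inv_mul_add {y : ℕ → ℝ} {β C D : ℝ} (hβ₀ : 0 ≤ β)
    (hβ₁ : β < 1) (hD : 0 ≤ D) (hCD : C ≤ D * (1 - β)) (hy₁ : y 1 ≤ D)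
    (hrec : ∀ k, 1 ≤ k →
      y (k + 1) ≤ (1 - 1 / ((k : ℝ) + 1)) * y k + C / ((k : ℝ) + 1) ^ (β + 1)) :
    ∀ k, 1 ≤ k → y k ≤ D / (k : ℝ) ^ β := by
  intro k hk
  induction k, hk using Nat.le_induction with
  | base => simpa using hy₁
  | succ k hk ih =>
    have hk' : (0 : ℝ) < k := by exact_mod_cast hk
    have hcoef : 0 ≤ 1 - 1 / ((k : ℝ) + 1) := by
      rw [sub_nonneg, div_le_one (by linarith)]; linarith
    push_cast
    calc y (k + 1) ≤ (1 - 1 / ((k : ℝ) + 1)) * y k + C / ((k : ℝ) + 1) ^ (β + 1) := hrec k hk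
      _ ≤ (1 - 1 / ((k : ℝ) + 1)) * (D / (k : ℝ) ^ β) + C / ((k : ℝ) + 1) ^ (β + 1) := by gcongr
      _ ≤ D / ((k : ℝ) + 1) ^ β := one_sub_inv_mul_div_rpow_add_le hk' hβ₀ hβ₁ hD hCD

theorem stmt_9_general (y : ℕ → ℝ) (C α : ℝ) (hC : 0 < C)
    (hα₁ : 1 / 2 < α) (hα₂ : α < 1)
    (hrec : ∀ k, 1 ≤ k →
      y (k + 1) ≤ (1 - 1 / ((k : ℝ) + 1)) * y k + C / ((k : ℝ) + 1) ^ (2 * α)) :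
    ∃ C' > 0, ∀ k, 1 ≤ k → y k ≤ C' / (k : ℝ) ^ (2 * α - 1) := by
  have hβ : 0 < 1 - (2 * α - 1) := by linarith
  have hD : 0 < max (C / (1 - (2 * α - 1))) (y 1) :=
    (div_pos hC hβ).trans_le (le_max_left _ _)
  refine ⟨_, hD, le_div_rpow_of_le_one_sub_inv_mul_add (by linarith) (by linarith) hD.le ?_
    (le_max_right _ _) (by simpa only [sub_add_cancel] using hrec)⟩
  exact (div_le_iff₀ hβ).mp (le_max_left _ _)

/-- Chung-type lemma: if a nonnegative sequence satisfies
`y_{k+1} ≤ (1 - 1/(k+1)) y_k + C/(k+1)^{2α}` for all `k ≥ 1` with `C > 0` and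
`1/2 < α < 1`, then `y_k ≤ C'/k^{2α-1}` for some constant `C' > 0`. -/
theorem stmt_9 (y : ℕ → ℝ) (hy : ∀ k, 0 ≤ y k) (C α : ℝ) (hC : 0 < C)
    (hα₁ : 1 / 2 < α) (hα₂ : α < 1)
    (hrec : ∀ k, 1 ≤ k →
      y (k + 1) ≤ (1 - 1 / ((k : ℝ) + 1)) * y k + C / ((k : ℝ) + 1) ^ (2 * α)) :
    ∃ C' > 0, ∀ k, 1 ≤ k → y k ≤ C' / (k : ℝ) ^ (2 * α - 1) :=
  stmt_9_general y C α hC hα₁ hα₂ hrec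
end
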